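/- arXiv:1904.12097 — 7 statements merged into one kernel-verified Lean document; each statement's English description precedes it below -/
import Mathlib

section
/- Let x and z be rational numbers. The point (x, z/2) is at rational distance from both (0, 1/2) and (0, -1/2) if and only if the polynomial p(u) = u^4 - (z^2 + 4x^2 + 1)u^2 + z^2 has a nonzero rational root. -/
/-!
If `a` and `b` are the two distances, then `2 (a² + b²) = z² + 4x² + 1` and `b² - a² = z`, so the
quartic factors as `∏ (u ∓ a ∓ b)` and `a + b` is a nonzero rational root. Conversely, a nonzero
root `u` yields the distances `(u ∓ z / u) / 2`.
-/

theorem exists_rat_eq_sqrt_iff_isSquare {q : ℚ} (hq : 0 ≤ q) :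
    (∃ r : ℚ, √(q : ℝ) = r) ↔ IsSquare q := by
  constructor
  · rintro ⟨r, hr⟩
    refine ⟨r, Rat.cast_injective (α := ℝ) ?_⟩
    rw [Rat.cast_mul, ← hr, Real.mul_self_sqrt (by exact_mod_cast hq)]
  · rintro ⟨r, rfl⟩
    exact ⟨|r|, by push_cast; exact Real.sqrt_mul_self_eq_abs _⟩

section Quartic

variable {K : Type*} [Field K] [NeZero (2 : K)]

theorem quartic_eq_mul_of_sq_eq {x z a b u : K} (ha : a ^ 2 = x ^ 2 + (z / 2 - 1 / 2) ^ 2)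
    (hb : b ^ 2 = x ^ 2 + (z / 2 + 1 / 2) ^ 2) :
    u ^ 4 - (z ^ 2 + 4 * x ^ 2 + 1) * u ^ 2 + z ^ 2 =
      ((u - a) ^ 2 - b ^ 2) * ((u + a) ^ 2 - b ^ 2) := by
  have hsum : 2 * (a ^ 2 + b ^ 2) = z ^ 2 + 4 * x ^ 2 + 1 := by
    rw [ha, hb]; field_simp; ring
  have hdiff : b ^ 2 - a ^ 2 = z := by
    rw [ha, hb]; field_simp; ring
  rw [← hsum, ← hdiff]
  ring

theorem sq_eq_of_quartic_eq_zero {x z u : K} (hu : u ≠ 0)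
    (h : u ^ 4 - (z ^ 2 + 4 * x ^ 2 + 1) * u ^ 2 + z ^ 2 = 0) :
    ((u - z / u) / 2) ^ 2 = x ^ 2 + (z / 2 - 1 / 2) ^ 2 ∧
      ((u + z / u) / 2) ^ 2 = x ^ 2 + (z / 2 + 1 / 2) ^ 2 := by
  constructor <;> (field_simp; linear_combination h)

end Quartic

theorem isSquare_and_isSquare_iff_exists_quartic_root {K : Type*} [Field K] [LinearOrder K]
    [IsStrictOrderedRing K] (x z : K) :
    (IsSquare (x ^ 2 + (z / 2 - 1 / 2) ^ 2) ∧ IsSquare (x ^ 2 + (z / 2 + 1 / 2) ^ 2)) ↔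
      ∃ u : K, u ≠ 0 ∧ u ^ 4 - (z ^ 2 + 4 * x ^ 2 + 1) * u ^ 2 + z ^ 2 = 0 := by
  constructor
  · rintro ⟨⟨a, ha⟩, ⟨b, hb⟩⟩
    have ha' : |a| ^ 2 = x ^ 2 + (z / 2 - 1 / 2) ^ 2 := by rw [sq_abs, sq, ha]
    have hb' : |b| ^ 2 = x ^ 2 + (z / 2 + 1 / 2) ^ 2 := by rw [sq_abs, sq, hb]
    have hab : |a| + |b| ≠ 0 := by
      intro h
      have ha0 : |a| = 0 := by linarith [abs_nonneg a, abs_nonneg b]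
      have hb0 : |b| = 0 := by linarith [abs_nonneg a, abs_nonneg b]
      rw [ha0] at ha'
      rw [hb0] at hb'
      nlinarith [sq_nonneg x, sq_nonneg z]
    refine ⟨|a| + |b|, hab, ?_⟩
    rw [quartic_eq_mul_of_sq_eq ha' hb']
    ring
  · rintro ⟨u, hu, h⟩
    obtain ⟨h₁, h₂⟩ := sq_eq_of_quartic_eq_zero hu h
    exact ⟨⟨_, h₁ ▸ sq _⟩, ⟨_, h₂ ▸ sq _⟩⟩

theorem two_distance_iff_rational_root (x z : ℚ) :
    ((∃ r : ℚ, Real.sqrt ((x : ℝ) ^ 2 + ((z : ℝ) / 2 - 1 / 2) ^ 2) = r) ∧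
      (∃ r : ℚ, Real.sqrt ((x : ℝ) ^ 2 + ((z : ℝ) / 2 + 1 / 2) ^ 2) = r)) ↔
    (∃ u : ℚ, u ≠ 0 ∧ u ^ 4 - (z ^ 2 + 4 * x ^ 2 + 1) * u ^ 2 + z ^ 2 = 0) := by
  have h₁ : (x : ℝ) ^ 2 + ((z : ℝ) / 2 - 1 / 2) ^ 2 =
      ((x ^ 2 + (z / 2 - 1 / 2) ^ 2 : ℚ) : ℝ) := by
    push_cast; rfl
  have h₂ : (x : ℝ) ^ 2 + ((z : ℝ) / 2 + 1 / 2) ^ 2 =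
      ((x ^ 2 + (z / 2 + 1 / 2) ^ 2 : ℚ) : ℝ) := by
    push_cast; rfl
  rw [h₁, h₂, exists_rat_eq_sqrt_iff_isSquare (by positivity),
    exists_rat_eq_sqrt_iff_isSquare (by positivity)]
  exact isSquare_and_isSquare_iff_exists_quartic_root x z
end

section
/- If a is rational with v_3(a) = 0, and the point (x, z/2) with x, z rational is at rational distance from all four vertices (0, ±1/2), (a, ±1/2), then v_3(x) < 0 or v_3(z) < 0. -/
/-!
Suppose `x` and `z` were `3`-adic integers. A rational distance `r` to a vertex gives
`(2r)^2 = 4w^2 + (z ± 1)^2` with `w ∈ {x, x - a}`, so reducing modulo `3` makes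
`4w^2 + (z ± 1)^2` a square in `𝔽₃` for both signs. Since `a` is a `3`-adic unit, one of `x`,
`x - a` is a unit, hence `4w^2 = 1`; as `2` is not a square in `𝔽₃`, this forces
`z ≡ 1` and `z ≡ -1`, which is absurd.
-/

open PadicInt

namespace PadicInt

variable {p : ℕ} [Fact p.Prime]

@[simp, norm_cast]
theorem coe_ofNat (n : ℕ) [n.AtLeastTwo] : ((ofNat(n) : ℤ_[p]) : ℚ_[p]) = ofNat(n) :=
  coe_natCast n

theorem exists_coe_eq_ratCast_of_padicValRat_nonneg {q : ℚ} (hq : 0 ≤ padicValRat p q) :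
    ∃ u : ℤ_[p], (u : ℚ_[p]) = q :=
  ⟨⟨q, (Padic.norm_le_one_iff_val_nonneg _).2 (by rwa [Padic.valuation_ratCast])⟩, rfl⟩

theorem toZMod_ne_zero_of_coe_eq_ratCast {u : ℤ_[p]} {q : ℚ} (hu : (u : ℚ_[p]) = q)
    (hq0 : q ≠ 0) (hq : padicValRat p q = 0) : toZMod u ≠ 0 := by
  have hunit : IsUnit u := by
    rw [isUnit_iff, norm_def, hu, Padic.norm_eq_zpow_neg_valuation (by exact_mod_cast hq0),
      Padic.valuation_ratCast, hq, neg_zero, zpow_zero]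
  rw [ne_eq, ← RingHom.mem_ker, ker_toZMod]
  exact fun h => h hunit

theorem isSquare_toZMod_of_sq_eq {u : ℤ_[p]} {t : ℚ_[p]} (h : t ^ 2 = u) :
    IsSquare (toZMod u) := by
  have ht : ‖t‖ ≤ 1 := by
    refine (pow_le_one_iff_of_nonneg (norm_nonneg t) two_ne_zero).1 ?_
    rw [← norm_pow, h]
    exact u.norm_le_one
  let T : ℤ_[p] := ⟨t, ht⟩
  have hsq : T ^ 2 = u := Subtype.ext (by rw [coe_pow]; exact h)
  exact ⟨toZMod T, by rw [← hsq, map_pow, sq]⟩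

theorem isSquare_toZMod_of_sqrt_eq {u : ℤ_[p]} {c q r : ℚ} (hq : 0 ≤ q)
    (hu : (u : ℚ_[p]) = ((c ^ 2 * q : ℚ) : ℚ_[p])) (h : √(q : ℝ) = r) :
    IsSquare (toZMod u) := by
  have hr : r ^ 2 = q := by
    have := Real.sq_sqrt (Rat.cast_nonneg.2 hq)
    rw [h] at this
    exact_mod_cast this
  exact isSquare_toZMod_of_sq_eq (t := ((c * r : ℚ) : ℚ_[p])) (by rw [hu, ← hr]; push_cast; ring)

end PadicInt

theorem ZMod.not_isSquare_and_isSquare {w z : ZMod 3} (hw : w ≠ 0) :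
    ¬ (IsSquare (4 * w ^ 2 + (z - 1) ^ 2) ∧ IsSquare (4 * w ^ 2 + (z + 1) ^ 2)) := by
  revert w z; decide

theorem PadicInt.toZMod_eq_zero_of_rational_distances {W Z : ℤ_[3]} {w z : ℚ}
    (hW : (W : ℚ_[3]) = w) (hZ : (Z : ℚ_[3]) = z)
    (h₁ : ∃ r : ℚ, √((w : ℝ) ^ 2 + ((z : ℝ) / 2 - 1 / 2) ^ 2) = r)
    (h₂ : ∃ r : ℚ, √((w : ℝ) ^ 2 + ((z : ℝ) / 2 + 1 / 2) ^ 2) = r) : toZMod W = 0 := by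
  obtain ⟨r₁, hr₁⟩ := h₁
  obtain ⟨r₂, hr₂⟩ := h₂
  by_contra hW0
  refine ZMod.not_isSquare_and_isSquare (z := toZMod Z) hW0 ⟨?_, ?_⟩
  · have := isSquare_toZMod_of_sqrt_eq (u := 4 * W ^ 2 + (Z - 1) ^ 2) (c := 2)
      (q := w ^ 2 + (z / 2 - 1 / 2) ^ 2) (by positivity) (by push_cast [hW, hZ]; ring)
      (by push_cast; exact hr₁)
    simpa only [map_add, map_sub, map_mul, map_pow, map_one, map_ofNat] using this
  · have := isSquare_toZMod_of_sqrt_eq (u := 4 * W ^ 2 + (Z + 1) ^ 2) (c := 2)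
      (q := w ^ 2 + (z / 2 + 1 / 2) ^ 2) (by positivity) (by push_cast [hW, hZ]; ring)
      (by push_cast; exact hr₂)
    simpa only [map_add, map_mul, map_pow, map_one, map_ofNat] using this

theorem valuation_neg_of_rational_distance (a x z : ℚ) (ha0 : a ≠ 0)
    (ha : padicValRat 3 a = 0)
    (h1 : ∃ r : ℚ, Real.sqrt ((x : ℝ) ^ 2 + ((z : ℝ) / 2 - 1 / 2) ^ 2) = r)
    (h2 : ∃ r : ℚ, Real.sqrt ((x : ℝ) ^ 2 + ((z : ℝ) / 2 + 1 / 2) ^ 2) = r)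
    (h3 : ∃ r : ℚ, Real.sqrt (((x : ℝ) - a) ^ 2 + ((z : ℝ) / 2 - 1 / 2) ^ 2) = r)
    (h4 : ∃ r : ℚ, Real.sqrt (((x : ℝ) - a) ^ 2 + ((z : ℝ) / 2 + 1 / 2) ^ 2) = r) :
    padicValRat 3 x < 0 ∨ padicValRat 3 z < 0 := by
  by_contra! hxz
  obtain ⟨X, hX⟩ := exists_coe_eq_ratCast_of_padicValRat_nonneg hxz.1
  obtain ⟨Z, hZ⟩ := exists_coe_eq_ratCast_of_padicValRat_nonneg hxz.2
  obtain ⟨A, hA⟩ := exists_coe_eq_ratCast_of_padicValRat_nonneg ha.ge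
  have hX0 : toZMod X = 0 := toZMod_eq_zero_of_rational_distances hX hZ h1 h2
  have hXA0 : toZMod (X - A) = 0 :=
    toZMod_eq_zero_of_rational_distances (w := x - a) (by push_cast [hX, hA]; rfl) hZ
      (by exact_mod_cast h3) (by exact_mod_cast h4)
  refine toZMod_ne_zero_of_coe_eq_ratCast hA ha0 ha ?_
  simpa [hX0] using hXA0
end

section
/- If a is a rational number with v_3(a) = 0, then there is no rational x such that the point (x, 0) is at rational distance from all four vertices (0, ±1/2), (a, ±1/2) with x satisfying v_3(x) ≥ 0, except possibly x = a/2; and x = a/2 is also impossible since a and 1 cannot both be legs of a Pythagorean triangle when v_3(a) = 0. -/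
/-!
Only the distances to `(0, -1/2)` and `(a, -1/2)` are needed: they give rationals `r, r'` with
`(2r)² = (2x)² + 1` and `(2r')² = (2(x - a))² + 1`. Since `v₃(x) ≥ 0` and `v₃(a) = 0`, one of
`x`, `x - a` is a `3`-adic unit `w`. Reducing `s² = w² + 1` modulo `3` inside `ℤ_[3]` gives
`s² = 2` in `ZMod 3`, and `2` is not a square mod `3`.
-/

theorem ZMod.three_sq_ne_sq_add_one : ∀ s w : ZMod 3, w ≠ 0 → s ^ 2 ≠ w ^ 2 + 1 := by decide

theorem PadicInt.sq_ne_sq_add_one_of_isUnit (s w : ℤ_[3]) (hw : IsUnit w) :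
    s ^ 2 ≠ w ^ 2 + 1 := fun h ↦
  ZMod.three_sq_ne_sq_add_one (toZMod s) (toZMod w) (hw.map toZMod).ne_zero (by
    simpa only [map_pow, map_add, map_one] using congrArg toZMod h)

theorem Padic.sq_ne_sq_add_one_of_norm_eq_one (s w : ℚ_[3]) (hw : ‖w‖ = 1) :
    s ^ 2 ≠ w ^ 2 + 1 := by
  intro h
  have hs : ‖s‖ ≤ 1 := by
    have : ‖s‖ ^ 2 ≤ 1 := by
      rw [← norm_pow, h]
      refine (Padic.nonarchimedean _ _).trans ?_
      simp [hw]
    nlinarith [norm_nonneg s]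
  exact PadicInt.sq_ne_sq_add_one_of_isUnit ⟨s, hs⟩ ⟨w, hw.le⟩
    (PadicInt.isUnit_iff.2 hw) (PadicInt.ext (by push_cast; exact h))

theorem Padic.norm_ratCast_le_one_of_padicValRat_nonneg {p : ℕ} [Fact p.Prime] {q : ℚ}
    (hq : 0 ≤ padicValRat p q) : ‖(q : ℚ_[p])‖ ≤ 1 := by
  rwa [norm_le_one_iff_val_nonneg, valuation_ratCast]

theorem Padic.norm_ratCast_eq_one_of_padicValRat_eq_zero {p : ℕ} [Fact p.Prime] {q : ℚ}
    (hq0 : q ≠ 0) (hq : padicValRat p q = 0) : ‖(q : ℚ_[p])‖ = 1 := by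
  rw [norm_eq_zpow_neg_valuation (by exact_mod_cast hq0), valuation_ratCast, hq]
  simp

theorem Rat.sq_eq_of_sqrt_eq {q r : ℚ} (hq : 0 ≤ q) (h : Real.sqrt q = r) : r ^ 2 = q := by
  have := Real.sq_sqrt (Rat.cast_nonneg.2 hq)
  rw [h] at this
  exact_mod_cast this

theorem Rat.sq_ne_sq_add_quarter_of_padicNorm_eq_one (t u : ℚ) (hu : ‖(u : ℚ_[3])‖ = 1) :
    t ^ 2 ≠ u ^ 2 + 1 / 4 := fun h ↦
  Padic.sq_ne_sq_add_one_of_norm_eq_one (2 * t) (2 * u)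
    (by rw [norm_mul, hu, mul_one]; exact_mod_cast Padic.norm_natCast_eq_one_iff.2 (by norm_num))
    (by exact_mod_cast (by linear_combination 4 * h : (2 * t) ^ 2 = (2 * u) ^ 2 + 1))

theorem no_axis_point (a : ℚ) (ha0 : a ≠ 0) (ha : padicValRat 3 a = 0) :
    ¬ ∃ x : ℚ, 0 ≤ padicValRat 3 x ∧
      (∃ r : ℚ, Real.sqrt ((x : ℝ) ^ 2 + ((0 : ℝ) - 1 / 2) ^ 2) = r) ∧
      (∃ r : ℚ, Real.sqrt ((x : ℝ) ^ 2 + ((0 : ℝ) + 1 / 2) ^ 2) = r) ∧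
      (∃ r : ℚ, Real.sqrt (((x : ℝ) - a) ^ 2 + ((0 : ℝ) - 1 / 2) ^ 2) = r) ∧
      (∃ r : ℚ, Real.sqrt (((x : ℝ) - a) ^ 2 + ((0 : ℝ) + 1 / 2) ^ 2) = r) := by
  rintro ⟨x, hx, ⟨r, hr⟩, -, ⟨r', hr'⟩, -⟩
  have hr_sq : r ^ 2 = x ^ 2 + 1 / 4 :=
    Rat.sq_eq_of_sqrt_eq (by positivity) (by rw [← hr]; push_cast; ring_nf)
  have hr'_sq : r' ^ 2 = (x - a) ^ 2 + 1 / 4 :=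
    Rat.sq_eq_of_sqrt_eq (by positivity) (by rw [← hr']; push_cast; ring_nf)
  have ha_norm := Padic.norm_ratCast_eq_one_of_padicValRat_eq_zero ha0 ha
  rcases (Padic.norm_ratCast_le_one_of_padicValRat_nonneg hx).lt_or_eq with hlt | heq
  · refine Rat.sq_ne_sq_add_quarter_of_padicNorm_eq_one r' (x - a) ?_ hr'_sq
    rw [Rat.cast_sub, sub_eq_add_neg, Padic.add_eq_max_of_ne (by rw [norm_neg, ha_norm]; exact hlt.ne),
      norm_neg, ha_norm, max_eq_right hlt.le]
  · exact Rat.sq_ne_sq_add_quarter_of_padicNorm_eq_one r x heq hr_sq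
end

section
/- Suppose u, x, z are rational numbers, all with v_3 equal to the same integer k < 0, and u^4 - (z^2 + 4x^2 + 1)u^2 + z^2 = 0. Then a contradiction follows; i.e., there is no such solution. -/
/-!
Multiplying by `3 ^ (-k)` turns `u, x, z` into `3`-adic units `U, X, Z`, and the equation into
`U⁴ - (Z² + 4X²)U² = 3^(-2k) (U² - Z²)`. Since `k < 0`, the right side vanishes modulo `3`, while
every unit squares to `1` modulo `3`, so the left side is `1 - 5 ≡ -1`.
-/

lemma Padic.exists_unit_eq_prime_pow_mul_ratCast {p : ℕ} [Fact p.Prime] {q : ℚ} {n : ℕ}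
    (hq : q ≠ 0) (hv : padicValRat p q = -n) :
    ∃ ε : ℤ_[p]ˣ, ((ε : ℤ_[p]) : ℚ_[p]) = (p : ℚ_[p]) ^ n * q := by
  have hnorm : ‖(p : ℚ_[p]) ^ n * q‖ = 1 := by
    rw [norm_mul, Padic.norm_p_pow, Padic.norm_eq_zpow_neg_valuation (by exact_mod_cast hq),
      Padic.valuation_ratCast, hv, ← zpow_add₀ (by exact_mod_cast (Fact.out : p.Prime).ne_zero)]
    simp
  exact ⟨PadicInt.mkUnits hnorm, rfl⟩

lemma ZMod.three_quartic_ne_zero {a b c : ZMod 3} (ha : a ≠ 0) (hb : b ≠ 0) (hc : c ≠ 0) :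
    a ^ 4 - (c ^ 2 + 4 * b ^ 2) * a ^ 2 ≠ 0 := by
  have hsq : ∀ {t : ZMod 3}, t ≠ 0 → t ^ 2 = 1 := ZMod.pow_card_sub_one_eq_one
  rw [show a ^ 4 = (a ^ 2) ^ 2 by ring, hsq ha, hsq hb, hsq hc]
  decide

theorem no_equal_negative_valuation (u x z : ℚ) (k : ℤ) (hk : k < 0)
    (hu : padicValRat 3 u = k) (hx : padicValRat 3 x = k) (hz : padicValRat 3 z = k)
    (h : u ^ 4 - (z ^ 2 + 4 * x ^ 2 + 1) * u ^ 2 + z ^ 2 = 0) :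
    False := by
  obtain ⟨n, rfl⟩ : ∃ n : ℕ, k = -n := ⟨k.natAbs, by omega⟩
  have ne_zero {q : ℚ} (hq : padicValRat 3 q = -n) : q ≠ 0 := by
    rintro rfl
    rw [padicValRat.zero] at hq
    omega
  obtain ⟨U, hU⟩ := Padic.exists_unit_eq_prime_pow_mul_ratCast (ne_zero hu) hu
  obtain ⟨X, hX⟩ := Padic.exists_unit_eq_prime_pow_mul_ratCast (ne_zero hx) hx
  obtain ⟨Z, hZ⟩ := Padic.exists_unit_eq_prime_pow_mul_ratCast (ne_zero hz) hz
  have scaled : (U : ℤ_[3]) ^ 4 - (Z ^ 2 + 4 * X ^ 2) * U ^ 2 = 3 ^ (2 * n) * (U ^ 2 - Z ^ 2) := by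
    have h' : ((u ^ 4 - (z ^ 2 + 4 * x ^ 2 + 1) * u ^ 2 + z ^ 2 : ℚ) : ℚ_[3]) = 0 := by
      rw [h, Rat.cast_zero]
    apply PadicInt.ext
    have h3 : ((3 : ℤ_[3]) : ℚ_[3]) = 3 := by norm_cast
    have h4 : ((4 : ℤ_[3]) : ℚ_[3]) = 4 := by norm_cast
    push_cast [h3, h4] at h' ⊢
    rw [hU, hX, hZ, Nat.cast_ofNat]
    linear_combination (3 : ℚ_[3]) ^ (4 * n) * h'
  have reduced := congrArg PadicInt.toZMod scaled
  simp only [map_sub, map_add, map_mul, map_pow, map_ofNat] at reduced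
  rw [show (3 : ZMod 3) = 0 from rfl, zero_pow (by omega), zero_mul] at reduced
  exact ZMod.three_quartic_ne_zero (U.map _).ne_zero (X.map _).ne_zero (Z.map _).ne_zero reduced
end

section
/- Let a be a nonzero rational. If (x, 0) is at rational distance from all four vertices (0, ±1/2), (a, ±1/2), then the point (1/(2a), x/a - 1/2) is at rational distance from all four vertices (0, ±1/2), (1/a, ±1/2). -/
theorem rect_transform (a x : ℚ) (ha : a ≠ 0)
    (h1 : ∃ r : ℚ, Real.sqrt ((x : ℝ) ^ 2 + ((0 : ℝ) - 1 / 2) ^ 2) = r)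
    (h2 : ∃ r : ℚ, Real.sqrt ((x : ℝ) ^ 2 + ((0 : ℝ) + 1 / 2) ^ 2) = r)
    (h3 : ∃ r : ℚ, Real.sqrt (((x : ℝ) - a) ^ 2 + ((0 : ℝ) - 1 / 2) ^ 2) = r)
    (h4 : ∃ r : ℚ, Real.sqrt (((x : ℝ) - a) ^ 2 + ((0 : ℝ) + 1 / 2) ^ 2) = r) :
    (∃ r : ℚ, Real.sqrt (((1 / (2 * a) : ℚ) : ℝ) ^ 2 + (((x / a - 1 / 2 : ℚ) : ℝ) - 1 / 2) ^ 2) = r) ∧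
    (∃ r : ℚ, Real.sqrt (((1 / (2 * a) : ℚ) : ℝ) ^ 2 + (((x / a - 1 / 2 : ℚ) : ℝ) + 1 / 2) ^ 2) = r) ∧
    (∃ r : ℚ, Real.sqrt ((((1 / (2 * a) : ℚ) : ℝ) - ((1 / a : ℚ) : ℝ)) ^ 2 + (((x / a - 1 / 2 : ℚ) : ℝ) - 1 / 2) ^ 2) = r) ∧
    (∃ r : ℚ, Real.sqrt ((((1 / (2 * a) : ℚ) : ℝ) - ((1 / a : ℚ) : ℝ)) ^ 2 + (((x / a - 1 / 2 : ℚ) : ℝ) + 1 / 2) ^ 2) = r) := by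
  obtain ⟨r1, hr1⟩ := h1
  obtain ⟨r3, hr3⟩ := h3
  have ha' : (a : ℝ) ≠ 0 := by exact_mod_cast ha
  have key : ∀ t : ℝ, Real.sqrt ((1 / (a : ℝ)) ^ 2 * t) = |1 / (a : ℝ)| * Real.sqrt t := by
    intro t
    rw [Real.sqrt_mul (sq_nonneg _), Real.sqrt_sq_eq_abs]
  have e1 : (((1 / (2 * a) : ℚ) : ℝ)) ^ 2 + (((x / a - 1 / 2 : ℚ) : ℝ) - 1 / 2) ^ 2
      = (1 / (a : ℝ)) ^ 2 * (((x : ℝ) - a) ^ 2 + ((0 : ℝ) - 1 / 2) ^ 2) := by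
    push_cast
    field_simp
    ring
  have e2 : (((1 / (2 * a) : ℚ) : ℝ)) ^ 2 + (((x / a - 1 / 2 : ℚ) : ℝ) + 1 / 2) ^ 2
      = (1 / (a : ℝ)) ^ 2 * ((x : ℝ) ^ 2 + ((0 : ℝ) - 1 / 2) ^ 2) := by
    push_cast
    field_simp
    ring
  have e3 : ((((1 / (2 * a) : ℚ) : ℝ)) - ((1 / a : ℚ) : ℝ)) ^ 2 + (((x / a - 1 / 2 : ℚ) : ℝ) - 1 / 2) ^ 2
      = (1 / (a : ℝ)) ^ 2 * (((x : ℝ) - a) ^ 2 + ((0 : ℝ) - 1 / 2) ^ 2) := by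
    push_cast
    field_simp
    ring
  have e4 : ((((1 / (2 * a) : ℚ) : ℝ)) - ((1 / a : ℚ) : ℝ)) ^ 2 + (((x / a - 1 / 2 : ℚ) : ℝ) + 1 / 2) ^ 2
      = (1 / (a : ℝ)) ^ 2 * ((x : ℝ) ^ 2 + ((0 : ℝ) - 1 / 2) ^ 2) := by
    push_cast
    field_simp
    ring
  refine ⟨⟨|1 / a| * r3, ?_⟩, ⟨|1 / a| * r1, ?_⟩, ⟨|1 / a| * r3, ?_⟩, ⟨|1 / a| * r1, ?_⟩⟩
  · rw [e1, key, hr3]; push_cast; ring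
  · rw [e2, key, hr1]; push_cast; ring
  · rw [e3, key, hr3]; push_cast; ring
  · rw [e4, key, hr1]; push_cast; ring
end

section
/- If rational numbers X, Y, Z, T, U (from a rational solution to the four-distance problem, i.e., distances to the corners of a square with rational side T, satisfying equations (1) and (2)) arise from a point (x,y) with v_3(x) < 0 or v_3(y) < 0 and v_3(x) ≠ v_3(y), then v_3(X) = v_3(Y) = v_3(Z) = v_3(U) = min{v_3(x), v_3(y)} < v_3(T). -/
/-!
Let `a` be whichever of `x`, `y` has the smaller, hence negative, `3`-adic valuation, and `b` the
other one. The shifts `0`, `-1`, `±1/2` are `3`-adically integral, so shifting `a` keeps its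
valuation and shifting `b` keeps a valuation above `v(a)`. In a sum of squares `a' ^ 2 + b' ^ 2`
with `v(a') < v(b')` the first square dominates, so every distance has valuation `v(a)`, the
negative minimum of `v(x)` and `v(y)`, while `v(T) = v(1) = 0`.
-/

lemma ne_zero_of_padicValRat_ne_zero {p : ℕ} {a : ℚ} (ha : padicValRat p a ≠ 0) : a ≠ 0 := by
  rintro rfl
  exact ha padicValRat.zero

section

variable {p : ℕ} [Fact p.Prime]

lemma padicValRat_half_of_ne_two (hp : p ≠ 2) : padicValRat p (1 / 2) = 0 := by
  rw [one_div, padicValRat.inv, neg_eq_zero, show ((2 : ℚ)) = ((2 : ℕ) : ℚ) by norm_num,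
    padicValRat.of_nat, Nat.cast_eq_zero, padicValNat.eq_zero_iff]
  exact Or.inr (Or.inr fun h => hp ((Nat.prime_dvd_prime_iff_eq Fact.out Nat.prime_two).1 h))

lemma padicValRat_add_eq_left {a s : ℚ} (ha : a ≠ 0) (hlt : padicValRat p a < padicValRat p s) :
    padicValRat p (a + s) = padicValRat p a := by
  rcases eq_or_ne s 0 with rfl | hs
  · rw [add_zero]
  have has : a + s ≠ 0 := fun h => by
    rw [eq_neg_of_add_eq_zero_right h, padicValRat.neg] at hlt
    exact lt_irrefl _ hlt
  exact padicValRat.add_eq_of_lt has ha hs hlt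

/-- `ha` covers `b + t = 0`, where `padicValRat p 0 = 0`. -/
lemma padicValRat_lt_add_of_neg {a b t : ℚ} (ha : padicValRat p a < 0)
    (hb : padicValRat p a < padicValRat p b) (ht : padicValRat p a < padicValRat p t) :
    padicValRat p a < padicValRat p (b + t) := by
  rcases eq_or_ne (b + t) 0 with h | h
  · rwa [h, padicValRat.zero]
  · exact padicValRat.lt_add_of_lt h hb ht

lemma padicValRat_eq_of_sq_eq_sq_add_sq {D a b : ℚ} (hD : D ^ 2 = a ^ 2 + b ^ 2) (ha : a ≠ 0)
    (hab : padicValRat p a < padicValRat p b) : padicValRat p D = padicValRat p a := by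
  have hsq : padicValRat p (a ^ 2 + b ^ 2) = padicValRat p (a ^ 2) :=
    padicValRat_add_eq_left (pow_ne_zero 2 ha) (by simp only [padicValRat.pow]; push_cast; omega)
  have := congrArg (padicValRat p) hD
  rw [hsq, padicValRat.pow, padicValRat.pow] at this
  push_cast at this
  omega

lemma padicValRat_eq_of_sq_eq_shifted {D a b s t : ℚ} (hD : D ^ 2 = (a + s) ^ 2 + (b + t) ^ 2)
    (ha : padicValRat p a < 0) (hab : padicValRat p a < padicValRat p b)
    (hs : 0 ≤ padicValRat p s) (ht : 0 ≤ padicValRat p t) :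
    padicValRat p D = padicValRat p a := by
  have has : padicValRat p (a + s) = padicValRat p a :=
    padicValRat_add_eq_left (ne_zero_of_padicValRat_ne_zero ha.ne) (by omega)
  rw [← has] at ha ⊢
  exact padicValRat_eq_of_sq_eq_sq_add_sq hD (ne_zero_of_padicValRat_ne_zero ha.ne)
    (padicValRat_lt_add_of_neg ha (by omega) (by omega))

lemma padicValRat_eq_min_of_sq_eq_shifted {D x y s t : ℚ} (hD : D ^ 2 = (x + s) ^ 2 + (y + t) ^ 2)
    (hneg : min (padicValRat p x) (padicValRat p y) < 0) (hne : padicValRat p x ≠ padicValRat p y)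
    (hs : 0 ≤ padicValRat p s) (ht : 0 ≤ padicValRat p t) :
    padicValRat p D = min (padicValRat p x) (padicValRat p y) := by
  rcases hne.lt_or_gt with h | h
  · rw [min_eq_left h.le] at hneg ⊢
    exact padicValRat_eq_of_sq_eq_shifted hD hneg h hs ht
  · rw [min_eq_right h.le] at hneg ⊢
    exact padicValRat_eq_of_sq_eq_shifted (by rw [hD, add_comm]) hneg h ht hs

end

theorem valuations_of_distances (x y X Y Z T U : ℚ)
    (hxy : (padicValRat 3 x < 0 ∨ padicValRat 3 y < 0) ∧ padicValRat 3 x ≠ padicValRat 3 y)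
    (hX : X ^ 2 = x ^ 2 + (y - 1 / 2) ^ 2)
    (hU : U ^ 2 = x ^ 2 + (y + 1 / 2) ^ 2)
    (hY : Y ^ 2 = (x - 1) ^ 2 + (y - 1 / 2) ^ 2)
    (hZ : Z ^ 2 = (x - 1) ^ 2 + (y + 1 / 2) ^ 2)
    (hT : T = 1) :
    padicValRat 3 X = min (padicValRat 3 x) (padicValRat 3 y) ∧
    padicValRat 3 Y = min (padicValRat 3 x) (padicValRat 3 y) ∧
    padicValRat 3 Z = min (padicValRat 3 x) (padicValRat 3 y) ∧
    padicValRat 3 U = min (padicValRat 3 x) (padicValRat 3 y) ∧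
    min (padicValRat 3 x) (padicValRat 3 y) < padicValRat 3 T := by
  have : Fact (Nat.Prime 3) := ⟨Nat.prime_three⟩
  obtain ⟨hneg, hne⟩ := hxy
  have hmin : min (padicValRat 3 x) (padicValRat 3 y) < 0 := by omega
  have h0 : 0 ≤ padicValRat 3 0 := padicValRat.zero.ge
  have hm1 : 0 ≤ padicValRat 3 (-1) := by rw [padicValRat.neg, padicValRat.one]
  have hp : 0 ≤ padicValRat 3 (1 / 2) := (padicValRat_half_of_ne_two (by norm_num)).ge
  have hm : 0 ≤ padicValRat 3 (-(1 / 2)) := by rwa [padicValRat.neg]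
  have dist {D s t : ℚ} (hD : D ^ 2 = (x + s) ^ 2 + (y + t) ^ 2) (hs : 0 ≤ padicValRat 3 s)
      (ht : 0 ≤ padicValRat 3 t) := padicValRat_eq_min_of_sq_eq_shifted hD hmin hne hs ht
  refine ⟨dist (by rw [hX]; ring) h0 hm, dist (by rw [hY]; ring) hm1 hm,
    dist (by rw [hZ]; ring) hm1 hp, dist (by rw [hU]; ring) h0 hp, ?_⟩
  rwa [hT, padicValRat.one]
end

section
/- The octic parametrization X = t^8-8t^7+12t^6+24t^5-10t^4-24t^3+12t^2+8t+1, Y = 8t^7-16t^6-8t^5-8t^3+16t^2+8t, Z = t^8+12t^6-32t^5-10t^4-32t^3+12t^2+1, T = t^8-4t^6+22t^4-4t^2+1 (for rational t) never yields a solution to the four-distance problem, because it always violates the necessary condition v_3(Z) < v_3(T): if v_3(t) < 0 then v_3(T) = 8·v_3(t) = v_3(Z), and if v_3(t) ≥ 0 then T ≡ 1 (mod 3) so v_3(T) = 0 ≤ v_3(Z). -/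
/-!
Write `t = a / b` in lowest terms. Then `T = F(a, b) / b⁸` and `Z = G(a, b) / b⁸` for integral binary
octic forms `F`, `G`, and `F(a, b)` is prime to `3` because `F` has no nontrivial zero over `𝔽₃`.
Hence `v₃(T) = -v₃(b⁸)`, while `v₃(Z) = v₃(G(a, b)) - v₃(b⁸) ≥ v₃(T)`.
-/

-- `octicT` and `octicZ` are the homogenizations of `T(t)` and `Z(t)`.
def octicT {R : Type*} [CommRing R] (a b : R) : R :=
  a^8 - 4*a^6*b^2 + 22*a^4*b^4 - 4*a^2*b^6 + b^8

def octicZ {R : Type*} [CommRing R] (a b : R) : R :=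
  a^8 + 12*a^6*b^2 - 32*a^5*b^3 - 10*a^4*b^4 - 32*a^3*b^5 + 12*a^2*b^6 + b^8

theorem padicValRat_div_le_of_not_dvd {p : ℕ} [Fact p.Prime] {N m : ℤ} (hN : ¬ (p : ℤ) ∣ N)
    (hm : m ≠ 0) (M : ℤ) : padicValRat p (N / m) ≤ padicValRat p (M / m) := by
  have hN0 : N ≠ 0 := by rintro rfl; exact hN (dvd_zero _)
  have hvN : padicValRat p N = 0 := by
    rw [padicValRat.of_int, padicValInt.eq_zero_of_not_dvd hN, Nat.cast_zero]
  have hvm : 0 ≤ padicValRat p m := by rw [padicValRat.of_int]; positivity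
  rw [padicValRat.div (by exact_mod_cast hN0) (by exact_mod_cast hm), hvN, zero_sub]
  rcases eq_or_ne M 0 with rfl | hM
  · simp
  · have hvM : 0 ≤ padicValRat p M := by rw [padicValRat.of_int]; positivity
    rw [padicValRat.div (by exact_mod_cast hM) (by exact_mod_cast hm)]
    linarith

theorem octicT_ne_zero_zmod_three : ∀ x y : ZMod 3, ¬ (x = 0 ∧ y = 0) → octicT x y ≠ 0 := by
  unfold octicT; decide

theorem not_three_dvd_octicT {a b : ℤ} (hab : IsCoprime a b) : ¬ (3 : ℤ) ∣ octicT a b := by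
  intro h3
  have hmod : octicT (a : ZMod 3) (b : ZMod 3) = 0 := by
    have := (ZMod.intCast_zmod_eq_zero_iff_dvd (octicT a b) 3).2 h3
    simpa [octicT] using this
  refine octicT_ne_zero_zmod_three _ _ ?_ hmod
  rintro ⟨ha, hb⟩
  have := hab.map (Int.castRingHom (ZMod 3))
  simp only [eq_intCast, ha, hb] at this
  exact not_isCoprime_zero_zero this

theorem octicT_num_den (t : ℚ) :
    t^8 - 4*t^6 + 22*t^4 - 4*t^2 + 1 = (octicT t.num t.den : ℤ) / ((t.den : ℤ)^8 : ℤ) := by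
  conv_lhs => rw [← Rat.num_div_den t]
  have : (t.den : ℚ) ≠ 0 := by exact_mod_cast t.den_nz
  push_cast [octicT]
  field_simp

theorem octicZ_num_den (t : ℚ) :
    t^8 + 12*t^6 - 32*t^5 - 10*t^4 - 32*t^3 + 12*t^2 + 1
      = (octicZ t.num t.den : ℤ) / ((t.den : ℤ)^8 : ℤ) := by
  conv_lhs => rw [← Rat.num_div_den t]
  have : (t.den : ℚ) ≠ 0 := by exact_mod_cast t.den_nz
  push_cast [octicZ]
  field_simp

theorem octic_parametrization_fails_general (t Z T : ℚ)
    (hZ : Z = t^8 + 12*t^6 - 32*t^5 - 10*t^4 - 32*t^3 + 12*t^2 + 1)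
    (hT : T = t^8 - 4*t^6 + 22*t^4 - 4*t^2 + 1) :
    ¬ padicValRat 3 Z < padicValRat 3 T := by
  rw [not_lt, hZ, hT, octicZ_num_den, octicT_num_den]
  exact padicValRat_div_le_of_not_dvd (not_three_dvd_octicT t.isCoprime_num_den)
    (pow_ne_zero 8 (by exact_mod_cast t.den_nz)) _

theorem octic_parametrization_fails (t X Y Z T : ℚ)
    (hX : X = t^8 - 8*t^7 + 12*t^6 + 24*t^5 - 10*t^4 - 24*t^3 + 12*t^2 + 8*t + 1)
    (hY : Y = 8*t^7 - 16*t^6 - 8*t^5 - 8*t^3 + 16*t^2 + 8*t)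
    (hZ : Z = t^8 + 12*t^6 - 32*t^5 - 10*t^4 - 32*t^3 + 12*t^2 + 1)
    (hT : T = t^8 - 4*t^6 + 22*t^4 - 4*t^2 + 1) :
    ¬ padicValRat 3 Z < padicValRat 3 T :=
  octic_parametrization_fails_general t Z T hZ hT
end
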